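/- arXiv:1112.2452 — 3 statements merged into one kernel-verified Lean document; each statement's English description precedes it below -/
import Mathlib

section
/- For n ≥ 1, define the polynomial L_n(t) = Σ_{k=0}^{n−1} ((−t)^k / k!) · n^{k−1} · binomial(n, k+1) (a polynomial with rational coefficients, evaluated at real t; note n^{k−1} = 1/n when k = 0, which combines with binomial(n,1) = n to give constant term 1). Then for every n ≥ 1 and every real t, the derivative satisfies L_n′(t) = −(n/2) · Σ_{k=1}^{n−1} L_k(t) · L_{n−k}(t). -/
open Finset in
/-- The polynomial `L n` evaluated at `t`:
`L_n(t) = Σ_{k=0}^{n-1} ((-t)^k / k!) · n^(k-1) · C(n, k+1)`,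
where `n^(k-1)` is interpreted with an integer exponent (so equals `1/n` for `k = 0`). -/
noncomputable def L (n : ℕ) (t : ℝ) : ℝ :=
  ∑ k ∈ Finset.range n,
    ((-t) ^ k / (Nat.factorial k)) * (n : ℝ) ^ ((k : ℤ) - 1) * (n.choose (k + 1))

/-!
Put `φ(w) = (1 + w) e^{-tw}` and `θ_j(z) = Σ_m [w^{m-j}] φ(w)^m z^m`. Lagrange inversion says
that `ψ(z) = Σ_k L_k z^k` solves `ψ = z φ(ψ)` and that `θ_{j+1} = ψ θ_j` for `j ≥ 1`. Since
`∂_t [w^{n-1}] φ^n = -n [w^{n-2}] φ^n`, the case `j = 1` gives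
`L_n' = -[z^n] θ_2 = -Σ (n-k) L_k L_{n-k}`, and symmetrising `k ↔ n - k` yields the claim.

Instead of invoking Lagrange inversion, we prove `θ_{j+1} = ψ θ_j` coefficientwise, by strong
induction on the degree `n` and downward induction on `j`: the defect in degree `n` has
`t`-derivative `-n` times the next defect plus a term killed by the lower degrees, and vanishes
at `t = 0` by the hockey-stick identity.
-/

open Finset PowerSeries
open scoped Nat

theorem Nat.sum_range_choose_eq_choose_succ (n j : ℕ) :
    ∑ k ∈ range n, k.choose j = n.choose (j + 1) := by
  induction n with
  | zero => simp
  | succ n ih => rw [sum_range_succ, ih, Nat.choose_succ_succ', add_comm]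

theorem Finset.Nat.sum_antidiagonal_eq_sum_Ico {M : Type*} [AddCommMonoid M] (f : ℕ → ℕ → M)
    (n : ℕ) (h0 : f 0 n = 0) (h0' : f n 0 = 0) :
    ∑ p ∈ antidiagonal n, f p.1 p.2 = ∑ k ∈ Ico 1 n, f k (n - k) := by
  rw [Nat.sum_antidiagonal_eq_sum_range_succ f n]
  refine (sum_subset (fun k hk => by simp only [mem_Ico, mem_range] at hk ⊢; omega)
    fun k hk hk' => ?_).symm
  obtain rfl | rfl : k = 0 ∨ k = n := by simp only [mem_Ico, mem_range] at hk hk'; omega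
  · exact h0
  · simpa using h0'

theorem PowerSeries.coeff_mul_eq_of_coeff_eq {R : Type*} [Semiring R] {f f' g : R⟦X⟧} {n : ℕ}
    (h : ∀ k < n, coeff k f = coeff k f') (hg : constantCoeff g = 0) :
    coeff n (f * g) = coeff n (f' * g) := by
  simp only [coeff_mul]
  refine sum_congr rfl fun p hp => ?_
  rcases Nat.eq_zero_or_pos p.2 with h0 | h0
  · rw [h0, coeff_zero_eq_constantCoeff_apply, hg, mul_zero, mul_zero]
  · rw [h p.1 (by have := mem_antidiagonal.mp hp; omega)]

/-- `lagrangeCoeff m i t` is the coefficient of `w ^ (m - i)` in `(1 + w) ^ m * exp (-m t w)`,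
and `0` for `i > m`. -/
noncomputable def lagrangeCoeff (m i : ℕ) (t : ℝ) : ℝ :=
  ∑ l ∈ range (m + 1), (m.choose (i + l) * (-m : ℝ) ^ l / l !) * t ^ l

lemma lagrangeCoeff_at_zero (m i : ℕ) : lagrangeCoeff m i 0 = m.choose i := by
  rw [lagrangeCoeff, sum_eq_single 0] <;> simp_all

lemma lagrangeCoeff_of_lt {m i : ℕ} (h : m < i) (t : ℝ) : lagrangeCoeff m i t = 0 :=
  sum_eq_zero fun l _ => by rw [Nat.choose_eq_zero_of_lt (by omega)]; simp

lemma hasDerivAt_lagrangeCoeff (m i : ℕ) (t : ℝ) :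
    HasDerivAt (lagrangeCoeff m i) (-m * lagrangeCoeff m (i + 1) t) t := by
  have h := HasDerivAt.fun_sum (u := range (m + 1)) fun l _ =>
    (hasDerivAt_pow l t).const_mul (m.choose (i + l) * (-m : ℝ) ^ l / l !)
  refine h.congr_deriv ?_
  rw [sum_range_succ', lagrangeCoeff, sum_range_succ,
    Nat.choose_eq_zero_of_lt (by omega : m < i + 1 + m)]
  simp only [Nat.cast_zero, zero_mul, mul_zero, zero_div, add_zero, mul_sum]
  refine sum_congr rfl fun l _ => ?_
  rw [Nat.factorial_succ, ← add_assoc, add_right_comm]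
  push_cast
  field_simp
  ring

lemma lagrangeCoeff_one (m : ℕ) (t : ℝ) : lagrangeCoeff m 1 t = m * L m t := by
  rw [lagrangeCoeff, sum_range_succ, Nat.choose_eq_zero_of_lt (by omega : m < 1 + m), L, mul_sum]
  simp only [Nat.cast_zero, zero_mul, zero_div, add_zero]
  refine sum_congr rfl fun l hl => ?_
  have hm : (m : ℝ) ≠ 0 := by rw [mem_range] at hl; exact_mod_cast (by omega : m ≠ 0)
  rw [zpow_sub₀ hm, zpow_natCast, zpow_one, add_comm 1 l, neg_pow, neg_pow t]
  field_simp

lemma L_zero (t : ℝ) : L 0 t = 0 := by simp [L]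

lemma L_at_zero {k : ℕ} (hk : k ≠ 0) : L k 0 = 1 := by
  have h := lagrangeCoeff_one k 0
  rw [lagrangeCoeff_at_zero, Nat.choose_one_right] at h
  exact (mul_eq_left₀ (by exact_mod_cast hk)).mp h.symm

lemma hasDerivAt_L (k : ℕ) (t : ℝ) : HasDerivAt (L k) (-lagrangeCoeff k 2 t) t := by
  rcases eq_or_ne k 0 with rfl | hk
  · rw [show L 0 = fun _ => 0 from funext L_zero, lagrangeCoeff_of_lt two_pos, neg_zero]
    exact hasDerivAt_const t 0
  · have hk : (k : ℝ) ≠ 0 := by exact_mod_cast hk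
    rw [show L k = fun s => lagrangeCoeff k 1 s / k from
      funext fun s => by rw [lagrangeCoeff_one]; field_simp]
    refine ((hasDerivAt_lagrangeCoeff k 1 t).div_const (k : ℝ)).congr_deriv ?_
    rw [neg_mul, neg_div, mul_div_cancel_left₀ _ hk]

noncomputable def seriesL (t : ℝ) : ℝ⟦X⟧ := mk fun k => L k t

noncomputable def seriesTheta (j : ℕ) (t : ℝ) : ℝ⟦X⟧ := mk fun m => lagrangeCoeff m j t

lemma constantCoeff_seriesTheta {j : ℕ} (hj : 1 ≤ j) (t : ℝ) :
    constantCoeff (seriesTheta j t) = 0 := by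
  rw [← coeff_zero_eq_constantCoeff_apply, seriesTheta, coeff_mk, lagrangeCoeff_of_lt hj]

lemma hasDerivAt_coeff_seriesTheta_sub (n j : ℕ) (t : ℝ) :
    HasDerivAt (fun s => coeff n (seriesTheta (j + 1) s - seriesL s * seriesTheta j s))
      (-n * coeff n (seriesTheta (j + 2) t - seriesL t * seriesTheta (j + 1) t)
        + coeff n (seriesTheta 2 t * seriesTheta j t
          - seriesTheta 1 t * seriesTheta (j + 1) t)) t := by
  simp only [map_sub, coeff_mul, seriesTheta, seriesL, coeff_mk]
  refine ((hasDerivAt_lagrangeCoeff n (j + 1) t).sub (HasDerivAt.fun_sum fun p _ =>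
    (hasDerivAt_L p.1 t).mul (hasDerivAt_lagrangeCoeff p.2 j t))).congr_deriv ?_
  have hterm : ∀ p ∈ antidiagonal n,
      -(-lagrangeCoeff p.1 2 t * lagrangeCoeff p.2 j t
          + L p.1 t * (-p.2 * lagrangeCoeff p.2 (j + 1) t))
        = n * (L p.1 t * lagrangeCoeff p.2 (j + 1) t)
          + (lagrangeCoeff p.1 2 t * lagrangeCoeff p.2 j t
            - lagrangeCoeff p.1 1 t * lagrangeCoeff p.2 (j + 1) t) := fun p hp => by
    rw [lagrangeCoeff_one, ← mem_antidiagonal.mp hp]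
    push_cast
    ring
  rw [sub_eq_add_neg, ← sum_neg_distrib, sum_congr rfl hterm, sum_add_distrib, ← mul_sum,
    sum_sub_distrib]
  ring

lemma coeff_seriesTheta_sub_of_le {n j : ℕ} (h : n ≤ j) (t : ℝ) :
    coeff n (seriesTheta (j + 1) t - seriesL t * seriesTheta j t) = 0 := by
  simp only [map_sub, coeff_mul, seriesTheta, seriesL, coeff_mk,
    lagrangeCoeff_of_lt (by omega : n < j + 1), zero_sub, neg_eq_zero]
  refine sum_eq_zero fun p hp => ?_
  obtain h | h : p.2 < j ∨ p.1 = 0 := by have := mem_antidiagonal.mp hp; omega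
  · rw [lagrangeCoeff_of_lt h, mul_zero]
  · rw [h, L_zero, zero_mul]

lemma coeff_seriesTheta_sub_at_zero (n j : ℕ) :
    coeff n (seriesTheta (j + 1) 0 - seriesL 0 * seriesTheta j 0) = 0 := by
  rw [map_sub, sub_eq_zero, coeff_mul, ← Nat.sum_antidiagonal_swap]
  simp only [seriesTheta, seriesL, coeff_mk, lagrangeCoeff_at_zero, Prod.fst_swap, Prod.snd_swap]
  rw [Nat.sum_antidiagonal_eq_sum_range_succ (fun a b => L b 0 * (a.choose j : ℝ)),
    sum_range_succ, Nat.sub_self, L_zero, zero_mul, add_zero,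
    ← Nat.sum_range_choose_eq_choose_succ, Nat.cast_sum]
  refine sum_congr rfl fun k hk => ?_
  rw [L_at_zero (by rw [mem_range] at hk; omega), one_mul]

lemma coeff_seriesTheta_sub_eq_zero_of_succ {n j : ℕ}
    (hsucc : ∀ t, coeff n (seriesTheta (j + 2) t - seriesL t * seriesTheta (j + 1) t) = 0)
    (hcomm : ∀ t, coeff n (seriesTheta 2 t * seriesTheta j t
      - seriesTheta 1 t * seriesTheta (j + 1) t) = 0) (t : ℝ) :
    coeff n (seriesTheta (j + 1) t - seriesL t * seriesTheta j t) = 0 := by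
  have hderiv : ∀ s, HasDerivAt
      (fun s => coeff n (seriesTheta (j + 1) s - seriesL s * seriesTheta j s)) 0 s := fun s => by
    simpa [hsucc s, hcomm s] using hasDerivAt_coeff_seriesTheta_sub n j s
  rw [is_const_of_deriv_eq_zero (fun s => (hderiv s).differentiableAt)
    (fun s => (hderiv s).deriv) t 0]
  exact coeff_seriesTheta_sub_at_zero n j

theorem seriesTheta_succ {j : ℕ} (hj : 1 ≤ j) (t : ℝ) :
    seriesTheta (j + 1) t = seriesL t * seriesTheta j t := by
  suffices h : ∀ n j, 1 ≤ j → ∀ t,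
      coeff n (seriesTheta (j + 1) t - seriesL t * seriesTheta j t) = 0 by
    ext n
    exact sub_eq_zero.mp (by simpa using h n j hj t)
  intro n
  induction n using Nat.strong_induction_on with | _ n ih =>
  have hlt : ∀ k < n, ∀ j, 1 ≤ j → ∀ t,
      coeff k (seriesTheta (j + 1) t) = coeff k (seriesL t * seriesTheta j t) :=
    fun k hk j hj t => sub_eq_zero.mp (by simpa using ih k hk j hj t)
  have hcomm : ∀ j, 1 ≤ j → ∀ t, coeff n (seriesTheta 2 t * seriesTheta j t
      - seriesTheta 1 t * seriesTheta (j + 1) t) = 0 := fun j hj t => by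
    -- both sides are `coeff n (seriesL t * seriesTheta 1 t * seriesTheta j t)` by the lower degrees
    rw [map_sub, sub_eq_zero,
      coeff_mul_eq_of_coeff_eq (hlt · · 1 le_rfl t) (constantCoeff_seriesTheta hj t),
      mul_comm (seriesTheta 1 t),
      coeff_mul_eq_of_coeff_eq (hlt · · j hj t) (constantCoeff_seriesTheta le_rfl t)]
    ring_nf
  have hdown : ∀ d j, 1 ≤ j → n ≤ j + d → ∀ t,
      coeff n (seriesTheta (j + 1) t - seriesL t * seriesTheta j t) = 0 := by
    intro d
    induction d with
    | zero => exact fun j _ h => coeff_seriesTheta_sub_of_le h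
    | succ d ihd =>
      exact fun j hj h => coeff_seriesTheta_sub_eq_zero_of_succ
        (ihd (j + 1) (by omega) (by omega)) (hcomm j hj)
  exact fun j hj => hdown n j hj (by omega)

theorem deriv_L_general (n : ℕ) (t : ℝ) :
    deriv (L n) t = -((n : ℝ) / 2) * ∑ k ∈ Finset.Ico 1 n, L k t * L (n - k) t := by
  have hθ : lagrangeCoeff n 2 t = ∑ p ∈ antidiagonal n, p.2 * (L p.1 t * L p.2 t) := by
    have h := congrArg (coeff n) (seriesTheta_succ le_rfl t)
    simp only [seriesTheta, seriesL, coeff_mul, coeff_mk, lagrangeCoeff_one] at h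
    rw [h]
    exact sum_congr rfl fun p _ => by ring
  have hsymm : 2 * ∑ p ∈ antidiagonal n, p.2 * (L p.1 t * L p.2 t)
      = n * ∑ p ∈ antidiagonal n, L p.1 t * L p.2 t := by
    nth_rewrite 1 [two_mul, ← Nat.sum_antidiagonal_swap]
    rw [← sum_add_distrib, mul_sum]
    refine sum_congr rfl fun p hp => ?_
    rw [← mem_antidiagonal.mp hp, Prod.fst_swap, Prod.snd_swap]
    push_cast
    ring
  rw [(hasDerivAt_L n t).deriv, ← Nat.sum_antidiagonal_eq_sum_Ico (fun a b => L a t * L b t) n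
    (by rw [L_zero, zero_mul]) (by rw [L_zero, mul_zero])]
  linear_combination -hθ - hsymm / 2

/-- The recursion `L_n' = -(n/2) Σ_{k=1}^{n-1} L_k L_{n-k}` for the polynomials `L_n`. -/
theorem deriv_L (n : ℕ) (hn : 1 ≤ n) (t : ℝ) :
    deriv (L n) t = -((n : ℝ) / 2) * ∑ k ∈ Finset.Ico 1 n, L k t * L (n - k) t :=
  deriv_L_general n t
end

section
/- For all quaternions q₁ and q₂, (1/4) · Σ_{γ₁, γ₂ ∈ {1,i,j,k}} (−2·Re(γ₁γ₂)) · (−2·Re(γ₁⁻¹ · q₁ · γ₂⁻¹ · q₂)) = (−2·Re(q₁)) · (−2·Re(q₂)). Equivalently, Σ_{γ₁,γ₂ ∈ {1,i,j,k}} Re(γ₁γ₂)·Re(γ₁⁻¹ q₁ γ₂⁻¹ q₂) = 4·Re(q₁)·Re(q₂). -/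
/-- The quaternion `i`. -/
def qi : Quaternion ℝ := ⟨0, 1, 0, 0⟩
/-- The quaternion `j`. -/
def qj : Quaternion ℝ := ⟨0, 0, 1, 0⟩
/-- The quaternion `k`. -/
def qk : Quaternion ℝ := ⟨0, 0, 0, 1⟩

/-- The standard unit quaternions `1, i, j, k` indexed by `Fin 4`. -/
noncomputable def unitQuat : Fin 4 → Quaternion ℝ := ![1, qi, qj, qk]

/-!
`Re(γ_a γ_b)` vanishes off the diagonal; on it, it is `1` for `γ = 1` and `-1` for `γ = i, j, k`,
where moreover `γ⁻¹ = -γ`. Hence the sum is `Re((q₁ - i q₁ i - j q₁ j - k q₁ k) q₂)`, and the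
classical identity `q + i q i + j q j + k q k = -2 q̄` turns the left factor into
`2 (q₁ + q̄₁) = 4 Re q₁`.
-/

open Quaternion

@[simp] theorem qi_re : qi.re = 0 := rfl
@[simp] theorem qi_imI : qi.imI = 1 := rfl
@[simp] theorem qi_imJ : qi.imJ = 0 := rfl
@[simp] theorem qi_imK : qi.imK = 0 := rfl
@[simp] theorem qj_re : qj.re = 0 := rfl
@[simp] theorem qj_imI : qj.imI = 0 := rfl
@[simp] theorem qj_imJ : qj.imJ = 1 := rfl
@[simp] theorem qj_imK : qj.imK = 0 := rfl
@[simp] theorem qk_re : qk.re = 0 := rfl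
@[simp] theorem qk_imI : qk.imI = 0 := rfl
@[simp] theorem qk_imJ : qk.imJ = 0 := rfl
@[simp] theorem qk_imK : qk.imK = 1 := rfl

theorem Quaternion.re_sum {R ι : Type*} [CommRing R] (s : Finset ι) (f : ι → ℍ[R]) :
    (∑ i ∈ s, f i).re = ∑ i ∈ s, (f i).re :=
  map_sum (QuaternionAlgebra.reₗ _ _ _) f s

theorem self_add_sandwich_qi_qj_qk (q : ℍ[ℝ]) :
    q + qi * q * qi + qj * q * qj + qk * q * qk = (-2 : ℝ) • star q := by
  ext <;> simp <;> ring

theorem re_unitQuat_mul_unitQuat_of_ne {a b : Fin 4} (h : a ≠ b) :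
    (unitQuat a * unitQuat b).re = 0 := by
  fin_cases a <;> fin_cases b <;> simp_all [unitQuat]

theorem unitQuat_mul_self_of_ne_zero {a : Fin 4} (h : a ≠ 0) : unitQuat a * unitQuat a = -1 := by
  fin_cases a <;> simp_all <;> ext <;> simp [unitQuat]

theorem unitQuat_inv_of_ne_zero {a : Fin 4} (h : a ≠ 0) : (unitQuat a)⁻¹ = -unitQuat a :=
  inv_eq_of_mul_eq_one_right <| by rw [mul_neg, unitQuat_mul_self_of_ne_zero h, neg_neg]

theorem sum_re_unitQuat_mul_self_smul_sandwich (q : ℍ[ℝ]) :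
    ∑ a, (unitQuat a * unitQuat a).re • ((unitQuat a)⁻¹ * q * (unitQuat a)⁻¹) = ↑(4 * q.re) := by
  have four_re : ((4 * q.re : ℝ) : ℍ[ℝ]) = (2 : ℝ) • (q + star q) := by
    rw [self_add_star', smul_coe]; ring_nf
  rw [Fin.sum_univ_four]
  simp only [unitQuat_inv_of_ne_zero, unitQuat_mul_self_of_ne_zero, ne_eq, Fin.reduceEq,
    not_false_eq_true]
  simp only [unitQuat, Matrix.cons_val, Matrix.cons_val_zero, Matrix.cons_val_one, one_mul, mul_one,
    inv_one, re_one, re_neg, one_smul, neg_smul, neg_mul, mul_neg, neg_neg, four_re]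
  linear_combination (norm := module) -self_add_sandwich_qi_qj_qk q

/-- `Σ_{γ₁,γ₂ ∈ {1,i,j,k}} Re(γ₁γ₂) Re(γ₁⁻¹ q₁ γ₂⁻¹ q₂) = 4 Re(q₁) Re(q₂)`. -/
theorem quaternion_re_factor_sum (q₁ q₂ : Quaternion ℝ) :
    ∑ a : Fin 4, ∑ b : Fin 4,
        (unitQuat a * unitQuat b).re *
          ((unitQuat a)⁻¹ * q₁ * (unitQuat b)⁻¹ * q₂).re
      = 4 * q₁.re * q₂.re := by
  calc ∑ a, ∑ b, (unitQuat a * unitQuat b).re * ((unitQuat a)⁻¹ * q₁ * (unitQuat b)⁻¹ * q₂).re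
      = ∑ a, (unitQuat a * unitQuat a).re * ((unitQuat a)⁻¹ * q₁ * (unitQuat a)⁻¹ * q₂).re := by
        refine Finset.sum_congr rfl fun a _ => Finset.sum_eq_single a (fun b _ hba => ?_) (by simp)
        rw [re_unitQuat_mul_unitQuat_of_ne hba.symm, zero_mul]
    _ = ((∑ a, (unitQuat a * unitQuat a).re • ((unitQuat a)⁻¹ * q₁ * (unitQuat a)⁻¹)) * q₂).re := by
        simp [Finset.sum_mul, Quaternion.re_sum]
    _ = 4 * q₁.re * q₂.re := by
        rw [sum_re_unitQuat_mul_self_smul_sandwich, coe_mul_eq_smul, re_smul, smul_eq_mul]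
end

section
/- Let N ≥ 1 and equip the real vector space so(N) = {X ∈ M_N(ℝ) : ᵗX + X = 0} of antisymmetric matrices with the inner product ⟨X, Y⟩ = (N/2)·Tr(ᵗX·Y). Then for any orthonormal basis (X₁, …, X_d) of so(N) (where d = N(N−1)/2) and any real N×N matrix A: Σ_{k=1}^{d} X_k · A · X_k = (1/N)·(ᵗA − Tr(A)·I_N). -/
/-!
Being orthonormal for `(N/2) Tr(ᵗX Y)`, the `X k` are linearly independent, and since an
antisymmetric matrix is determined by its entries above the diagonal, `dim so(N) ≤ N(N-1)/2`;
so they span `so(N)`. Expanding `E_pq - E_qp ∈ so(N)` in this basis gives the completeness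
relation `Σ_k (X_k)_ip (X_k)_qj = (1/N)(δ_iq δ_pj - δ_pq δ_ij)`, and contracting it with `A_pq`
gives the identity.
-/

open Matrix

section Biorthogonal

open Module Submodule

theorem sum_dual_smul_eq_of_mem_span {R M ι : Type*} [CommSemiring R] [AddCommMonoid M]
    [Module R M] [Fintype ι] [DecidableEq ι] {v : ι → M} {φ : ι → Dual R M}
    (hφ : ∀ k l, φ k (v l) = if k = l then 1 else 0) {w : M} (hw : w ∈ span R (Set.range v)) :
    ∑ k, φ k w • v k = w := by
  obtain ⟨c, rfl⟩ := (mem_span_range_iff_exists_fun R).1 hw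
  simp [hφ]

variable {K V ι : Type*} [Field K] [AddCommGroup V] [Module K V] [Fintype ι] [DecidableEq ι]
  {v : ι → V} {φ : ι → Dual K V}

theorem span_range_eq_of_dual_eq_ite [FiniteDimensional K V]
    (hφ : ∀ k l, φ k (v l) = if k = l then 1 else 0) {W : Submodule K V} (hvW : ∀ k, v k ∈ W)
    (hW : finrank K W ≤ Fintype.card ι) : span K (Set.range v) = W := by
  have hv : LinearIndependent K v :=
    .of_pairwise_dual_eq_zero_one v φ (fun k l hkl ↦ by simp [hφ, hkl]) (fun k ↦ by simp [hφ])
  refine eq_of_le_of_finrank_le (span_le.2 (Set.range_subset_iff.2 hvW)) ?_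
  rwa [finrank_span_eq_card hv]

end Biorthogonal

theorem Fin.card_subtype_fst_lt_snd (N : ℕ) :
    Fintype.card {p : Fin N × Fin N // p.1 < p.2} = N * (N - 1) / 2 := by
  rw [Fintype.card_subtype, Finset.card_filter, Fintype.sum_prod_type_right]
  simp only [← Finset.card_filter, Finset.filter_gt_eq_Iio, Fin.card_Iio]
  exact (Fin.sum_univ_eq_sum_range id N).trans (Finset.sum_range_id N)

open Module LieAlgebra.Orthogonal

attribute [local instance] LieRing.ofAssociativeRing

namespace Matrix

variable {K n : Type*} [Field K] [Fintype n] [DecidableEq n]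

theorem finrank_so_le_card_lt [CharZero K] [LinearOrder n] :
    finrank K (so n K).toSubmodule ≤ Fintype.card {p : n × n // p.1 < p.2} := by
  let upper : (so n K).toSubmodule →ₗ[K] {p : n × n // p.1 < p.2} → K :=
    (LinearMap.pi fun p ↦ entryLinearMap K K p.1.1 p.1.2) ∘ₗ (so n K).toSubmodule.subtype
  have : Function.Injective upper := by
    refine (injective_iff_map_eq_zero upper).2 fun ⟨M, hM⟩ hupper ↦ ?_
    have hskew : ∀ i j, M j i = -M i j := fun i j ↦ congrFun (congrFun ((mem_so n K M).1 hM) i) j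
    have hlt : ∀ i j, i < j → M i j = 0 := fun i j hij ↦ congrFun hupper ⟨(i, j), hij⟩
    ext i j
    rcases lt_trichotomy i j with hij | rfl | hji
    · exact hlt i j hij
    · exact self_eq_neg.1 (hskew i i)
    · simp [hskew j i, hlt j i hji]
  exact (LinearMap.finrank_le_finrank_of_injective this).trans_eq (finrank_fintype_fun_eq_card K)

variable {ι : Type*} [Fintype ι]

theorem sum_smul_eq_single_sub_single_of_orthonormal [DecidableEq ι] (c : K)
    (X : ι → Matrix n n K) (hskew : ∀ k, (X k)ᵀ = -X k)
    (horth : ∀ k l, c * ((X k)ᵀ * X l).trace = if k = l then 1 else 0)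
    (hcard : finrank K (so n K).toSubmodule ≤ Fintype.card ι) (p q : n) :
    ∑ k, (2 * c * X k p q) • X k = single p q 1 - single q p 1 := by
  let φ : ι → Dual K (Matrix n n K) :=
    fun k ↦ c • (traceLinearMap n K K ∘ₗ LinearMap.mulLeft K (X k)ᵀ)
  have hφ : ∀ k M, φ k M = c * ((X k)ᵀ * M).trace := fun _ _ ↦ rfl
  have hE : single p q 1 - single q p 1 ∈ (so n K).toSubmodule := by
    simp [transpose_single]
  have hφX : ∀ k l, φ k (X l) = if k = l then 1 else 0 := by simpa only [hφ] using horth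
  have hspan := span_range_eq_of_dual_eq_ite hφX (fun k ↦ (mem_so n K _).2 (hskew k)) hcard
  refine .trans (Finset.sum_congr rfl fun k _ ↦ ?_) (sum_dual_smul_eq_of_mem_span hφX (hspan ▸ hE))
  congr 1
  have hqp : X k q p = -X k p q := congrFun (congrFun (hskew k) p) q
  rw [hφ, Matrix.mul_sub, trace_sub, trace_mul_single, trace_mul_single]
  simp only [MulOpposite.op_one, transpose_apply, one_smul, hqp, smul_neg, sub_neg_eq_add]
  ring

theorem smul_sum_mul_mul_eq_of_sum_smul_eq {R : Type*} [CommRing R] (X : ι → Matrix n n R) (s : R)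
    (h : ∀ p q, ∑ k, (s * X k p q) • X k = single p q 1 - single q p 1) (A : Matrix n n R) :
    s • ∑ k, X k * A * X k = Aᵀ - A.trace • 1 := by
  have hentry : ∀ i p q j, ∑ k, s * X k i p * X k q j
      = (if i = q ∧ p = j then 1 else 0) - if p = q ∧ i = j then 1 else 0 := by
    intro i p q j
    simpa [sum_apply, single_apply] using congrFun (congrFun (h i p) q) j
  ext i j
  calc (s • ∑ k, X k * A * X k) i j = ∑ q, ∑ p, A p q * ∑ k, s * X k i p * X k q j := by
        simp only [smul_apply, sum_apply, mul_apply, Finset.mul_sum, Finset.sum_mul, smul_eq_mul]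
        rw [Finset.sum_comm]
        refine Finset.sum_congr rfl fun q _ ↦ ?_
        rw [Finset.sum_comm]
        exact Finset.sum_congr rfl fun p _ ↦ Finset.sum_congr rfl fun k _ ↦ by ring
    _ = (Aᵀ - A.trace • 1) i j := by
        simp [hentry, mul_sub, ite_and, trace, one_apply]

end Matrix

/-- If `(X k)` is an orthonormal basis of the space `so(N)` of antisymmetric real
matrices for the inner product `⟨X, Y⟩ = (N/2) Tr(ᵗX Y)` (a family of `N(N-1)/2`
orthonormal antisymmetric matrices is automatically a basis), then for every real
matrix `A`: `Σ_k X_k A X_k = (1/N)(ᵗA - Tr(A) I_N)`. -/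
theorem sum_sandwich_orthonormal_basis_orthogonal (N : ℕ) (hN : 1 ≤ N)
    (X : Fin (N * (N - 1) / 2) → Matrix (Fin N) (Fin N) ℝ)
    (hskew : ∀ k, (X k)ᵀ = -(X k))
    (horth : ∀ k l, ((N : ℝ) / 2) * ((X k)ᵀ * X l).trace = if k = l then 1 else 0)
    (A : Matrix (Fin N) (Fin N) ℝ) :
    ∑ k, X k * A * X k
      = (1 / (N : ℝ)) • (Aᵀ - A.trace • (1 : Matrix (Fin N) (Fin N) ℝ)) := by
  have hcard : finrank ℝ (so (Fin N) ℝ).toSubmodule ≤ Fintype.card (Fin (N * (N - 1) / 2)) := by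
    simpa [Fin.card_subtype_fst_lt_snd] using finrank_so_le_card_lt (K := ℝ) (n := Fin N)
  have hcomplete := sum_smul_eq_single_sub_single_of_orthonormal _ X hskew horth hcard
  rw [mul_div_cancel₀ _ two_ne_zero] at hcomplete
  have hN0 : (N : ℝ) ≠ 0 := Nat.cast_ne_zero.2 (Nat.one_le_iff_ne_zero.1 hN)
  rw [← smul_sum_mul_mul_eq_of_sum_smul_eq X _ hcomplete A, smul_smul, one_div,
    inv_mul_cancel₀ hN0, one_smul]
end
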